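/- (Schur test for positive kernels with values in a C*-algebra.) Let k : ℝⁿ×ℝⁿ → A be a continuous map with k(x,y) ≥ 0 (a positive element of A) for all x, y ∈ ℝⁿ. Suppose there are measurable functions p, q : ℝⁿ → (0,∞) and constants α, β > 0 such that for every x the map y ↦ k(x,y)q(y) is Bochner integrable with ∫_{ℝⁿ} k(x,y) q(y) dy ≤ α p(x)·1_A (in the C*-order), and for every y the map x ↦ k(x,y)p(x) is Bochner integrable with ∫_{ℝⁿ} k(x,y) p(x) dx ≤ β q(y)·1_A. Then for every u ∈ S(ℝⁿ, A) such that y ↦ k(x,y)u(y) is Bochner integrable for each x, the map (Ku)(x) := ∫_{ℝⁿ} k(x,y) u(y) dy satisfies ⟨Ku, Ku⟩ ≤ αβ · ⟨u, u⟩ in the C*-order of A, and in particular ‖Ku‖_H ≤ √(αβ) · ‖u‖_H. -/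

import Mathlib

open scoped BigOperators
open MeasureTheory Filter

noncomputable section

abbrev Rn (n : ℕ) := EuclideanSpace ℝ (Fin n)

def mdeg {n : ℕ} (γ : Fin n → ℕ) : ℕ := ∑ j, γ j

def mchoose {n : ℕ} (a b : Fin n → ℕ) : ℕ := ∏ j, (a j).choose (b j)

def mfact {n : ℕ} (a : Fin n → ℕ) : ℕ := ∏ j, (a j).factorial

section Derivs

variable {n : ℕ} {E : Type*} [NormedAddCommGroup E] [NormedSpace ℝ E]

/-- partial derivative in the `j`-th coordinate direction. -/
def pd (j : Fin n) (f : Rn n → E) : Rn n → E :=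
  fun x => fderiv ℝ f x (EuclideanSpace.single j 1)

/-- iterated multi-index partial derivative `∂^β`. -/
def pdM (β : Fin n → ℕ) : (Rn n → E) → Rn n → E :=
  (List.ofFn fun j : Fin n => (pd j)^[β j]).foldr (· ∘ ·) id

/-- the twisted derivative `∂_{B,ξ_j} := ∑ₖ B_{kj} ∂_{ξ_k}`. -/
def pdB (B : Matrix (Fin n) (Fin n) ℝ) (j : Fin n) (f : Rn n → E) : Rn n → E :=
  fun x => ∑ k, B k j • pd k f x

def pdBM (B : Matrix (Fin n) (Fin n) ℝ) (γ : Fin n → ℕ) : (Rn n → E) → Rn n → E :=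
  (List.ofFn fun j : Fin n => (pdB B j)^[γ j]).foldr (· ∘ ·) id

/-- the japanese bracket `⟨ξ⟩ = (1+|ξ|²)^{1/2}`. -/
def jb (ξ : Rn n) : ℝ := Real.sqrt (1 + ‖ξ‖ ^ 2)

/-- `x ↦ Bx` as a map of `ℝⁿ`. -/
def Bmul {n : ℕ} (B : Matrix (Fin n) (Fin n) ℝ) (x : Rn n) : Rn n :=
  (EuclideanSpace.equiv (Fin n) ℝ).symm (B.mulVec ((EuclideanSpace.equiv (Fin n) ℝ) x))

end Derivs

/-- A twisted `C*`-dynamical system datum: a continuous action of `ℝⁿ` on the unital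
`C*`-algebra `A` by `*`-automorphisms. -/
structure CstarDyn (n : ℕ) (A : Type*) [NormedRing A] [StarRing A] [NormedAlgebra ℂ A] where
  act : Rn n → A ≃⋆ₐ[ℂ] A
  act_zero : act 0 = (StarAlgEquiv.refl ℂ A : A ≃⋆ₐ[ℂ] A)
  act_add : ∀ s t : Rn n, act (s + t) = (act t).trans (act s)
  act_cont : ∀ a : A, Continuous fun t => act t a

section Dyn

variable {n : ℕ} {A : Type*} [NormedRing A] [StarRing A] [CStarRing A] [NormedAlgebra ℂ A]
  [CompleteSpace A] [StarModule ℂ A]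

/-- `a` is a smooth element for the action, i.e. `a ∈ A^∞`. -/
def CstarDyn.SmoothElem (D : CstarDyn n A) (a : A) : Prop :=
  ContDiff ℝ (⊤ : ℕ∞) fun t : Rn n => D.act t a

/-- `δ^γ a := i^{-|γ|} ∂_t^γ|_{t=0} α_t(a)`. -/
def CstarDyn.delta (D : CstarDyn n A) (γ : Fin n → ℕ) (a : A) : A :=
  (Complex.I ^ (-(mdeg γ : ℤ))) • pdM γ (fun t : Rn n => D.act t a) 0

/-- membership in the symbol space `S^m(ℝⁿ, A^∞)`. -/
def IsSymbol (D : CstarDyn n A) (m : ℝ) (f : Rn n → A) : Prop :=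
  ContDiff ℝ (⊤ : ℕ∞) f ∧ (∀ ξ, D.SmoothElem (f ξ)) ∧
    ∀ γ β : Fin n → ℕ, ∃ C : ℝ, 0 < C ∧
      ∀ ξ : Rn n, ‖D.delta γ (pdM β f ξ)‖ ≤ C * jb ξ ^ (m - (mdeg β : ℝ))

/-- the seminorm `p_N` on `S^m(ℝⁿ, A^∞)`. -/
def symbNorm (D : CstarDyn n A) (m : ℝ) (N : ℕ) (f : Rn n → A) : ℝ :=
  ⨆ (p : {q : (Fin n → ℕ) × (Fin n → ℕ) // mdeg q.1 + mdeg q.2 ≤ N}) (ξ : Rn n),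
    jb ξ ^ (-m + (mdeg p.1.2 : ℝ)) * ‖D.delta p.1.1 (pdM p.1.2 f ξ)‖

/-- `f ∼ Σ_{j≥0} f_j` in the sense that `f - Σ_{j<N} f_j ∈ S^{m-N}` for all `N ≥ 1`. -/
def SymbAsymp (D : CstarDyn n A) (m : ℝ) (f : Rn n → A) (fj : ℕ → Rn n → A) : Prop :=
  ∀ N : ℕ, 1 ≤ N → IsSymbol D (m - N) fun ξ => f ξ - ∑ j ∈ Finset.range N, fj j ξ

/-- homogeneity of degree `s` (for `λ ≥ 1`, `|ξ| ≥ 1`). -/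
def Homog {n : ℕ} (s : ℝ) (h : Rn n → A) : Prop :=
  ∀ lam : ℝ, 1 ≤ lam → ∀ ξ : Rn n, 1 ≤ ‖ξ‖ → h (lam • ξ) = lam ^ s • h ξ

/-- a smooth `A^∞`-valued homogeneous map of degree `s`. -/
def IsHomogPart (D : CstarDyn n A) (s : ℝ) (h : Rn n → A) : Prop :=
  ContDiff ℝ (⊤ : ℕ∞) h ∧ (∀ ξ, D.SmoothElem (h ξ)) ∧ Homog s h

/-- `f` is a classical symbol of order `m` with homogeneous parts `fj j` of degree `m - j`. -/
def IsClassicalWith (D : CstarDyn n A) (m : ℝ) (f : Rn n → A) (fj : ℕ → Rn n → A) : Prop :=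
  IsSymbol D m f ∧ (∀ j : ℕ, IsHomogPart D (m - j) (fj j)) ∧ SymbAsymp D m f fj

/-- `f^{B,α}(ξ) := ∂_x^α|_{x=0} [α_{-x}(f(ξ+Bx))]`. -/
def fBa (D : CstarDyn n A) (B : Matrix (Fin n) (Fin n) ℝ) (a : Fin n → ℕ) (f : Rn n → A) :
    Rn n → A :=
  fun ξ => pdM a (fun x => D.act (-x) (f (ξ + Bmul B x))) 0

/-- the degree `m - j` homogeneous part of `f^{B,α}`. -/
def fBaPart (D : CstarDyn n A) (B : Matrix (Fin n) (Fin n) ℝ) (a : Fin n → ℕ)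
    (fj : ℕ → Rn n → A) (j : ℕ) : Rn n → A :=
  fun ξ => ∑ k ∈ Finset.range (min j (mdeg a) + 1),
    ∑ b ∈ (Finset.Iic a).filter fun b => mdeg (a - b) = k,
      ((mchoose a b : ℂ) * Complex.I ^ mdeg b) • D.delta b (pdBM B (a - b) (fj (j - k)) ξ)

end Dyn

section Hilb

variable {n : ℕ} {A : Type*} [NormedRing A] [StarRing A] [CStarRing A] [NormedAlgebra ℂ A]
  [CompleteSpace A] [StarModule ℂ A]

/-- `A`-valued Schwartz maps. -/
def IsSchwartzMap (u : Rn n → A) : Prop :=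
  ContDiff ℝ (⊤ : ℕ∞) u ∧ ∀ a β : Fin n → ℕ, ∃ C : ℝ, ∀ x : Rn n,
    ‖(∏ j, x j ^ a j) • pdM β u x‖ ≤ C

/-- `A^∞`-valued Schwartz maps. -/
def IsSchwartzAinf (D : CstarDyn n A) (u : Rn n → A) : Prop :=
  ContDiff ℝ (⊤ : ℕ∞) u ∧ (∀ x, D.SmoothElem (u x)) ∧
    ∀ a β γ : Fin n → ℕ, ∃ C : ℝ, ∀ x : Rn n,
      ‖(∏ j, x j ^ a j) • D.delta γ (pdM β u x)‖ ≤ C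

/-- the Hilbert module norm `‖u‖ = ‖⟨u,u⟩‖^{1/2}`. -/
def Hnorm (u : Rn n → A) : ℝ := Real.sqrt ‖∫ x : Rn n, star (u x) * u x‖

/-- the Fourier transform of an `A`-valued map. -/
def Four (u : Rn n → A) : Rn n → A :=
  fun ξ => ∫ x : Rn n, Complex.exp (-Complex.I * ((inner ℝ x ξ : ℝ) : ℂ)) • u x

/-- the pseudodifferential multiplier
`(P_f u)(x) = (2π)^{-n} ∫ e^{i⟨x,ξ⟩} α_{-x}(f(ξ+Bx)) û(ξ) dξ`. -/
def Pmul (D : CstarDyn n A) (B : Matrix (Fin n) (Fin n) ℝ) (f u : Rn n → A) : Rn n → A :=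
  fun x => ((2 * Real.pi) ^ n : ℝ)⁻¹ •
    ∫ ξ : Rn n, Complex.exp (Complex.I * ((inner ℝ x ξ : ℝ) : ℂ)) •
      (D.act (-x) (f (ξ + Bmul B x)) * Four u ξ)

end Hilb

section Sector

/-- an open sector in `ℂ∖{0}`. -/
def IsOpenSector (Γ : Set ℂ) : Prop :=
  Γ.Nonempty ∧ IsOpen Γ ∧ (0 : ℂ) ∉ Γ ∧ ∀ t : ℝ, 0 < t → ∀ z ∈ Γ, (t : ℂ) * z ∈ Γ

/-- a holomorphic branch of the logarithm on `Γ`. -/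
def IsLogBranch (Γ : Set ℂ) (L : ℂ → ℂ) : Prop :=
  DifferentiableOn ℂ L Γ ∧ ∀ z ∈ Γ, Complex.exp (L z) = z

/-- a closed subsector of `Γ`. -/
def ClosedSubsector (Γ' Γ : Set ℂ) : Prop :=
  Γ'.Nonempty ∧ Γ' ⊆ Γ ∧ (∀ t : ℝ, 0 < t → ∀ z ∈ Γ', (t : ℂ) * z ∈ Γ') ∧
    IsClosed (insert (0 : ℂ) Γ')

/-- `μ^d` with respect to the branch `L` of the logarithm. -/
def cpowL (L : ℂ → ℂ) (d : ℝ) (μ : ℂ) : ℂ := Complex.exp ((d : ℂ) * L μ)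

end Sector

section WSymb

variable {n : ℕ} {A : Type*} [NormedRing A] [StarRing A] [CStarRing A] [NormedAlgebra ℂ A]
  [CompleteSpace A] [StarModule ℂ A]

/-- the function `z ↦ z^d f(ξ, 1/z)`, where `z^d` is taken with respect to the branch of
the logarithm determined by `L` via `log z = -L(1/z)`. -/
def zdSubst (L : ℂ → ℂ) (d : ℝ) (f : Rn n → ℂ → A) (ξ : Rn n) (z : ℂ) : A :=
  Complex.exp (-(d : ℂ) * L z⁻¹) • f ξ z⁻¹

/-- `‖δ^γ ∂_ξ^β ∂_z^j (z^d f(ξ,1/z))‖`. -/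
def wVal (D : CstarDyn n A) (L : ℂ → ℂ) (d : ℝ) (f : Rn n → ℂ → A)
    (γ β : Fin n → ℕ) (j : ℕ) (ξ : Rn n) (z : ℂ) : ℝ :=
  ‖D.delta γ (pdM β (fun ξ' => iteratedDeriv j (zdSubst L d f ξ') z) ξ)‖

/-- membership in the weakly parametric symbol space `S^{m,d}(ℝⁿ×Γ, A^∞)`. -/
def IsWSymb (D : CstarDyn n A) (Γ : Set ℂ) (L : ℂ → ℂ) (m d : ℝ) (f : Rn n → ℂ → A) : Prop :=
  ContDiffOn ℝ (⊤ : ℕ∞) (fun p : Rn n × ℂ => f p.1 p.2) (Set.univ ×ˢ Γ) ∧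
  (∀ ξ, ∀ μ ∈ Γ, D.SmoothElem (f ξ μ)) ∧
  (∀ ξ, DifferentiableOn ℂ (f ξ) Γ) ∧
  ∀ Γ' : Set ℂ, ClosedSubsector Γ' Γ → ∀ N : ℕ, ∃ C : ℝ, 0 < C ∧
    ∀ γ β : Fin n → ℕ, ∀ j : ℕ, mdeg γ + mdeg β + j ≤ N →
      ∀ ξ : Rn n, ∀ z : ℂ, z⁻¹ ∈ Γ' → ‖z‖ ≤ 1 →
        wVal D L d f γ β j ξ z ≤ C * (1 + ‖ξ‖) ^ (m + j - (mdeg β : ℝ))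

/-- the seminorm `p_{N,Γ'}` on `S^{m,d}(ℝⁿ×Γ, A^∞)`. -/
def wNorm (D : CstarDyn n A) (L : ℂ → ℂ) (Γ' : Set ℂ) (m d : ℝ) (N : ℕ)
    (f : Rn n → ℂ → A) : ℝ :=
  ⨆ (p : {q : (Fin n → ℕ) × (Fin n → ℕ) × ℕ // mdeg q.1 + mdeg q.2.1 + q.2.2 ≤ N})
    (ξ : Rn n) (z : {w : ℂ // w⁻¹ ∈ Γ' ∧ ‖w‖ ≤ 1}),
      (1 + ‖ξ‖) ^ (-m - (p.1.2.2 : ℝ) + (mdeg p.1.2.1 : ℝ)) *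
        wVal D L d f p.1.1 p.1.2.1 p.1.2.2 ξ z.1

/-- `f ∼ Σ_{j≥0} f_j` in `S^{∞,d}` with base order `mb`:
`f - Σ_{j<N} f_j ∈ S^{mb-N,d}` for every `N`. -/
def WAsymp (D : CstarDyn n A) (Γ : Set ℂ) (L : ℂ → ℂ) (mb d : ℝ)
    (f : Rn n → ℂ → A) (fj : ℕ → Rn n → ℂ → A) : Prop :=
  ∀ N : ℕ, IsWSymb D Γ L (mb - N) d fun ξ μ => f ξ μ - ∑ j ∈ Finset.range N, fj j ξ μ

/-- homogeneity in `(ξ,μ)` of degree `s` for `|ξ| ≥ 1`. -/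
def WHomog {n : ℕ} (Γ : Set ℂ) (s : ℝ) (h : Rn n → ℂ → A) : Prop :=
  ∀ lam : ℝ, 1 ≤ lam → ∀ ξ : Rn n, 1 ≤ ‖ξ‖ → ∀ μ ∈ Γ,
    h (lam • ξ) ((lam : ℂ) * μ) = lam ^ s • h ξ μ

/-- `f` is weakly polyhomogeneous of degree `m` and type `d` with parts `fj j`
(of homogeneity degree `m - j`, lying in `S^{m-j-d,d}`). -/
def WPolyhom (D : CstarDyn n A) (Γ : Set ℂ) (L : ℂ → ℂ) (m d : ℝ)
    (f : Rn n → ℂ → A) (fj : ℕ → Rn n → ℂ → A) : Prop :=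
  (∀ j : ℕ, IsWSymb D Γ L (m - j - d) d (fj j) ∧ WHomog Γ (m - (j : ℝ)) (fj j)) ∧
  WAsymp D Γ L (m - d) d f fj

/-- parametric `f^{B,α}(ξ,μ) := ∂_x^α|_{x=0} [α_{-x}(f(ξ+Bx,μ))]`. -/
def wfBa (D : CstarDyn n A) (B : Matrix (Fin n) (Fin n) ℝ) (a : Fin n → ℕ)
    (f : Rn n → ℂ → A) : Rn n → ℂ → A :=
  fun ξ μ => pdM a (fun x => D.act (-x) (f (ξ + Bmul B x) μ)) 0

/-- the degree `m - j` homogeneous part of the parametric `f^{B,α}`. -/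
def wfBaPart (D : CstarDyn n A) (B : Matrix (Fin n) (Fin n) ℝ) (a : Fin n → ℕ)
    (fj : ℕ → Rn n → ℂ → A) (j : ℕ) : Rn n → ℂ → A :=
  fun ξ μ => ∑ k ∈ Finset.range (min j (mdeg a) + 1),
    ∑ b ∈ (Finset.Iic a).filter fun b => mdeg (a - b) = k,
      ((mchoose a b : ℂ) * Complex.I ^ mdeg b) •
        D.delta b (pdBM B (a - b) (fun ξ' => fj (j - k) ξ' μ) ξ)

end WSymb

section Parametrix

variable {n : ℕ} {A : Type*} [NormedRing A] [StarRing A] [CStarRing A] [NormedAlgebra ℂ A]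
  [CompleteSpace A] [StarModule ℂ A]

/-- auxiliary recursive definition of the parametrix symbols: `gAux D B fparts m j l` is
`g_{-m-l}` for `l ≤ j`. -/
def gAux (D : CstarDyn n A) (B : Matrix (Fin n) (Fin n) ℝ) (fparts : ℕ → Rn n → A)
    (m : ℕ) : ℕ → ℕ → Rn n → ℂ → A
  | 0, _ => fun ξ μ => Ring.inverse (fparts 0 ξ - algebraMap ℂ A (μ ^ m))
  | (j + 1), l =>
    if l ≤ j then gAux D B fparts m j l
    else fun ξ μ =>
      - ∑ k ∈ Finset.range (j + 2), ∑ l' ∈ Finset.range (j + 1),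
          ∑ a ∈ (Finset.Iic fun _ : Fin n => j + 1).filter
              (fun a => k + l' + mdeg a = j + 1),
            (((-Complex.I) ^ mdeg a) / (mfact a : ℂ)) •
              (Ring.inverse (fparts 0 ξ - algebraMap ℂ A (μ ^ m)) *
                (pdM a (fparts k) ξ * wfBa D B a (gAux D B fparts m j l') ξ μ))

/-- the `j`-th parametrix symbol `g_{-m-j}(ξ,μ)`, defined by
`g_{-m} = (f_m - μ^m)⁻¹` and recursively
`g_{-m-j} = -Σ_{k+l+|α|=j, l<j} ((-i)^{|α|}/α!) (f_m-μ^m)⁻¹ (∂^α f_{m-k}) g^{B,α}_{-m-l}`. -/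
def gPart (D : CstarDyn n A) (B : Matrix (Fin n) (Fin n) ℝ) (fparts : ℕ → Rn n → A)
    (m : ℕ) (j : ℕ) : Rn n → ℂ → A :=
  gAux D B fparts m j j

end Parametrix

section Statement6Aux

open MeasureTheory

namespace S6

variable {A : Type*} [NormedRing A] [StarRing A] [CStarRing A]
  [NormedAlgebra ℂ A] [CompleteSpace A] [StarModule ℂ A]

omit [CStarRing A] [CompleteSpace A] in
lemma star_rsmul (r : ℝ) (c : A) : star (r • c) = r • star c := by
  rw [← algebraMap_smul ℂ r c, star_smul, ← algebraMap_smul ℂ r (star c)]; simp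

section Order

variable [PartialOrder A] [StarOrderedRing A]

lemma nonneg_of_dual (m : A)
    (h : ∀ φ : A →L[ℝ] ℝ, (∀ c : A, 0 ≤ c → 0 ≤ φ c) → 0 ≤ φ m) : 0 ≤ m := by
  letI : CStarAlgebra A := ⟨⟩
  by_contra hm
  have hconv : Convex ℝ {c : A | 0 ≤ c} := fun c hc d hd s t hs ht _ =>
    add_nonneg (smul_nonneg hs hc) (smul_nonneg ht hd)
  obtain ⟨f, r, hfm, hfs⟩ := geometric_hahn_banach_point_closed hconv
    CStarAlgebra.isClosed_nonneg hm
  have hr0 : r < 0 := by simpa using hfs 0 le_rfl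
  have hpos : ∀ c : A, 0 ≤ c → 0 ≤ f c := by
    intro c hc
    by_contra hneg
    push_neg at hneg
    have ht : (0:ℝ) < 2 * r / f c := div_pos_of_neg_of_neg (by linarith only [hr0]) hneg
    have h2 := hfs ((2 * r / f c) • c) (smul_nonneg ht.le hc)
    rw [_root_.map_smul, smul_eq_mul, div_mul_cancel₀] at h2
    · linarith only [h2, hr0]
    · exact ne_of_lt hneg
  have hfin := h f hpos
  linarith only [hfin, hfm, hr0]

lemma integral_nonneg_A {α : Type*} [MeasurableSpace α] {μ : Measure α}
    {f : α → A} (hf : ∀ x, 0 ≤ f x) : 0 ≤ ∫ x, f x ∂μ := by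
  by_cases hi : Integrable f μ
  · refine nonneg_of_dual _ fun φ hφ => ?_
    rw [← φ.integral_comp_comm hi]
    exact integral_nonneg fun x => hφ _ (hf x)
  · rw [integral_undef hi]

omit [CompleteSpace A] in
lemma cross_bound (kk v w : A) (hk : 0 ≤ kk) {t : ℝ} (ht : 0 < t) :
    star v * kk * w + star w * kk * v ≤ t • (star v * kk * v) + t⁻¹ • (star w * kk * w) := by
  have h0 : 0 ≤ star (t • v - w) * kk * (t • v - w) := star_left_conjugate_nonneg hk _
  have expand : star (t • v - w) * kk * (t • v - w)
      = ((t*t) • (star v * kk * v) + star w * kk * w)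
        - t • (star v * kk * w + star w * kk * v) := by
    rw [star_sub, star_rsmul]
    simp only [sub_mul, mul_sub, smul_mul_assoc, mul_smul_comm, smul_smul, smul_add, smul_sub]
    abel
  rw [expand] at h0
  have h1 := sub_nonneg.mp h0
  have h2 := smul_le_smul_of_nonneg_left h1 (inv_nonneg.mpr ht.le)
  rw [smul_smul, inv_mul_cancel₀ ht.ne', one_smul, smul_add, smul_smul] at h2
  have e1 : t⁻¹ * (t * t) = t := by field_simp
  rwa [e1] at h2

end Order

section IntAux

variable {α : Type*} [MeasurableSpace α] {μ : Measure α}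

lemma integrable_star' {f : α → A} (hf : Integrable f μ) :
    Integrable (fun x => star (f x)) μ := by
  simpa using ((starL' ℝ : A ≃L[ℝ] A).toContinuousLinearMap).integrable_comp hf

lemma integral_star' {f : α → A} (hf : Integrable f μ) :
    ∫ x, star (f x) ∂μ = star (∫ x, f x ∂μ) := by
  simpa using ((starL' ℝ : A ≃L[ℝ] A).toContinuousLinearMap.integral_comp_comm hf)

lemma int_const_mul {f : α → A} (hf : Integrable f μ) (c : A) :
    ∫ x, c * f x ∂μ = c * ∫ x, f x ∂μ := by
  simpa using ((ContinuousLinearMap.mul ℝ A c).integral_comp_comm hf)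

lemma int_mul_const {f : α → A} (hf : Integrable f μ) (c : A) :
    ∫ x, f x * c ∂μ = (∫ x, f x ∂μ) * c := by
  simpa using (((ContinuousLinearMap.mul ℝ A).flip c).integral_comp_comm hf)

lemma ofReal_integral_le {f : α → ℝ} (hf : Integrable f μ) :
    ENNReal.ofReal (∫ x, f x ∂μ) ≤ ∫⁻ x, ENNReal.ofReal (f x) ∂μ := by
  calc ENNReal.ofReal (∫ x, f x ∂μ) ≤ ENNReal.ofReal (∫ x, max (f x) 0 ∂μ) :=
        ENNReal.ofReal_le_ofReal (integral_mono hf hf.pos_part (fun x => le_max_left _ _))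
    _ = ∫⁻ x, ENNReal.ofReal (max (f x) 0) ∂μ :=
        ofReal_integral_eq_lintegral_ofReal hf.pos_part (ae_of_all _ fun x => le_max_right _ _)
    _ = ∫⁻ x, ENNReal.ofReal (f x) ∂μ := by
        refine lintegral_congr fun x => ?_
        rcases le_total (f x) 0 with h | h
        · simp [max_eq_right h, ENNReal.ofReal_of_nonpos h]
        · simp [max_eq_left h]

end IntAux

omit [StarRing A] [CStarRing A] [CompleteSpace A] [StarModule ℂ A] in
lemma pdM_zero {n : ℕ} (f : Rn n → A) : pdM (fun _ : Fin n => 0) f = f := by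
  have key : ∀ l : List ((Rn n → A) → Rn n → A), (∀ g ∈ l, g = id) →
      l.foldr (· ∘ ·) id = id := by
    intro l hl
    induction l with
    | nil => rfl
    | cons g l ih =>
      rw [List.foldr_cons, hl g List.mem_cons_self,
        ih (fun g' hg' => hl g' (List.mem_cons_of_mem _ hg'))]
      rfl
  show (List.ofFn fun j : Fin n => (pd j)^[0]).foldr (· ∘ ·) id f = f
  rw [key _ ?_]
  · rfl
  · intro g hg
    rw [List.mem_ofFn] at hg
    obtain ⟨j, rfl⟩ := hg
    exact Function.iterate_zero _

lemma one_add_sum_le_prod {n : ℕ} (f : Fin n → ℝ) (hf : ∀ j, 0 ≤ f j) :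
    1 + ∑ j, f j ≤ ∏ j, (1 + f j) := by
  classical
  have key : ∀ s : Finset (Fin n), 1 + ∑ j ∈ s, f j ≤ ∏ j ∈ s, (1 + f j) := by
    intro s
    induction s using Finset.induction_on with
    | empty => simp
    | @insert j s hj ih =>
      rw [Finset.sum_insert hj, Finset.prod_insert hj]
      have h1 : (0:ℝ) ≤ ∑ i ∈ s, f i := Finset.sum_nonneg fun i _ => hf i
      have h2 : (0:ℝ) ≤ 1 + f j := by linarith [hf j]
      have h3 := mul_le_mul_of_nonneg_left ih h2
      nlinarith [mul_nonneg (hf j) h1]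
  simpa using key Finset.univ

omit [StarRing A] [CStarRing A] [CompleteSpace A] [StarModule ℂ A] in
lemma schwartz_decay {n : ℕ} {u : Rn n → A} (hu : IsSchwartzMap u) (m : ℕ) :
    ∃ C : ℝ, ∀ x : Rn n, ‖u x‖ * (1 + ‖x‖) ^ (2*m) ≤ C := by
  classical
  choose c hc using fun a : Fin n → ℕ => hu.2 a (fun _ => 0)
  have hc' : ∀ (a : Fin n → ℕ) (x : Rn n), |∏ j, x j ^ a j| * ‖u x‖ ≤ c a := by
    intro a x
    have h := hc a x
    rwa [pdM_zero, norm_smul, Real.norm_eq_abs] at h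
  set S := Fintype.piFinset (fun _ : Fin n => Finset.range (m+1)) with hS
  refine ⟨(2:ℝ)^m * ∑ p ∈ S, (∏ j, (m.choose (p j) : ℝ)) * c (fun j => 2 * p j), fun x => ?_⟩
  have hx2 : ‖x‖^2 = ∑ j, x j ^ 2 := by
    rw [EuclideanSpace.norm_eq, Real.sq_sqrt (by positivity)]
    exact Finset.sum_congr rfl fun j _ => by rw [Real.norm_eq_abs, sq_abs]
  have h1 : (1 + ‖x‖)^(2*m) ≤ 2^m * (∏ j, (1 + x j ^ 2))^m := by
    have e2 : (1+‖x‖)^2 ≤ 2 * (1 + ‖x‖^2) := by nlinarith [sq_nonneg (1 - ‖x‖)]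
    have e3 : 1 + ‖x‖^2 ≤ ∏ j, (1 + x j ^ 2) := by
      rw [hx2]; exact one_add_sum_le_prod _ (fun j => sq_nonneg _)
    calc (1 + ‖x‖)^(2*m) = ((1+‖x‖)^2)^m := by rw [pow_mul]
      _ ≤ (2 * ∏ j, (1 + x j ^2))^m := by
          apply pow_le_pow_left₀ (by positivity)
          linarith
      _ = 2^m * (∏ j, (1 + x j ^2))^m := by rw [mul_pow]
  have h2 : ‖u x‖ * (∏ j, (1 + x j ^ 2))^m
      ≤ ∑ p ∈ S, (∏ j, (m.choose (p j) : ℝ)) * c (fun j => 2 * p j) := by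
    have e4 : (∏ j, (1 + x j ^ 2))^m
        = ∑ p ∈ S, ∏ j, ((x j ^2)^(p j) * (m.choose (p j) : ℝ)) := by
      have e5 : ∀ j : Fin n, (1 + x j ^2)^m
          = ∑ i ∈ Finset.range (m+1), ((x j ^2)^i * (m.choose i : ℝ)) := by
        intro j; rw [add_comm]
        simpa [one_pow] using add_pow (x j ^2) (1:ℝ) m
      rw [← Finset.prod_pow, Finset.prod_congr rfl fun j _ => e5 j, Finset.prod_univ_sum]
    rw [e4, Finset.mul_sum]
    apply Finset.sum_le_sum
    intro p _
    have key : ∏ j, ((x j ^2)^(p j) * (m.choose (p j):ℝ))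
        = (∏ j, (m.choose (p j):ℝ)) * ∏ j, x j ^ (2 * p j) := by
      rw [Finset.prod_mul_distrib, mul_comm]
      congr 1
      exact Finset.prod_congr rfl fun j _ => by rw [pow_mul]
    rw [key]
    have hnn : (0:ℝ) ≤ ∏ j, (m.choose (p j):ℝ) := Finset.prod_nonneg fun j _ => by positivity
    have habs : ∏ j, x j ^ (2 * p j) = |∏ j, x j ^ (2*p j)| := by
      rw [abs_of_nonneg (Finset.prod_nonneg fun j _ => by rw [pow_mul]; positivity)]
    calc ‖u x‖ * ((∏ j, (m.choose (p j):ℝ)) * ∏ j, x j ^ (2*p j))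
        = (∏ j, (m.choose (p j):ℝ)) * (|∏ j, x j ^ (2*p j)| * ‖u x‖) := by rw [← habs]; ring
      _ ≤ (∏ j, (m.choose (p j):ℝ)) * c (fun j => 2 * p j) :=
          mul_le_mul_of_nonneg_left (hc' _ x) hnn
  calc ‖u x‖ * (1+‖x‖)^(2*m) ≤ ‖u x‖ * (2^m * (∏ j, (1 + x j^2))^m) :=
        mul_le_mul_of_nonneg_left h1 (norm_nonneg _)
    _ = 2^m * (‖u x‖ * (∏ j, (1 + x j^2))^m) := by ring
    _ ≤ 2^m * ∑ p ∈ S, (∏ j, (m.choose (p j) : ℝ)) * c (fun j => 2 * p j) :=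
        mul_le_mul_of_nonneg_left h2 (by positivity)

omit [CompleteSpace A] [StarModule ℂ A] in
lemma schwartz_sq_integrable {n : ℕ} {u : Rn n → A} (hu : IsSchwartzMap u) :
    Integrable (fun x => star (u x) * u x) (volume : Measure (Rn n)) := by
  obtain ⟨C, hC⟩ := schwartz_decay hu (n+1)
  obtain ⟨C0, hC0⟩ := schwartz_decay hu 0
  have hC0' : ∀ x : Rn n, ‖u x‖ ≤ C0 := fun x => by simpa using hC0 x
  have hcont : Continuous fun x : Rn n => star (u x) * u x :=
    (continuous_star.comp hu.1.continuous).mul hu.1.continuous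
  have hr : (Module.finrank ℝ (Rn n) : ℝ) < ((2*(n+1) : ℕ) : ℝ) := by
    simp only [finrank_euclideanSpace, Fintype.card_fin]
    push_cast
    linarith
  refine ((integrable_one_add_norm (E := Rn n) (μ := volume)
      (r := ((2*(n+1):ℕ) : ℝ)) hr).const_mul (C0 * C)).mono'
      hcont.aestronglyMeasurable (ae_of_all _ fun x => ?_)
  have hx : (0:ℝ) < 1 + ‖x‖ := by positivity
  have hpow : (1 + ‖x‖) ^ (-((2*(n+1):ℕ) : ℝ)) = ((1 + ‖x‖) ^ (2*(n+1)))⁻¹ := by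
    rw [Real.rpow_neg hx.le, Real.rpow_natCast]
  have hux : ‖u x‖ ≤ C * (1 + ‖x‖) ^ (-((2*(n+1):ℕ) : ℝ)) := by
    rw [hpow, ← div_eq_mul_inv, le_div_iff₀ (by positivity)]
    exact hC x
  have hC0nn : 0 ≤ C0 := le_trans (norm_nonneg _) (hC0' x)
  calc ‖star (u x) * u x‖ ≤ ‖star (u x)‖ * ‖u x‖ := norm_mul_le _ _
    _ = ‖u x‖ * ‖u x‖ := by rw [norm_star]
    _ ≤ C0 * (C * (1 + ‖x‖) ^ (-((2*(n+1):ℕ) : ℝ))) :=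
        mul_le_mul (hC0' x) hux (norm_nonneg _) hC0nn
    _ = C0 * C * (1 + ‖x‖) ^ (-((2*(n+1):ℕ) : ℝ)) := by ring

end S6

end Statement6Aux

section Statement6Main

open MeasureTheory
open scoped ENNReal

namespace S6

variable {A : Type*} [NormedRing A] [StarRing A] [CStarRing A]
  [NormedAlgebra ℂ A] [CompleteSpace A] [StarModule ℂ A]
  [PartialOrder A] [StarOrderedRing A]

lemma pointwise_bound {n : ℕ} (kx : Rn n → A) (hkxc : Continuous kx) (hkxpos : ∀ y, 0 ≤ kx y)
    (q : Rn n → ℝ) (hq : Measurable q) (hqpos : ∀ y, 0 < q y)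
    (c : ℝ) (hc : 0 < c)
    (hint1 : Integrable (fun y : Rn n => q y • kx y) ∧ (∫ y : Rn n, q y • kx y) ≤ c • (1:A))
    (u : Rn n → A) (hcontu : Continuous u)
    (hku : Integrable fun y : Rn n => kx y * u y)
    (m : A) (hm : m = ∫ y : Rn n, kx y * u y)
    (φ : A →L[ℝ] ℝ) (hφ : ∀ d : A, 0 ≤ d → 0 ≤ φ d) :
    ENNReal.ofReal (φ (star m * m)) ≤
      ENNReal.ofReal c * ∫⁻ y : Rn n, ENNReal.ofReal ((q y)⁻¹ * φ (star (u y) * kx y * u y)) := by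
  have hφm : ∀ c₁ d₁ : A, c₁ ≤ d₁ → φ c₁ ≤ φ d₁ := fun c₁ d₁ h => by
    have h2 := hφ _ (sub_nonneg.mpr h); rw [map_sub] at h2; linarith
  have hkself : ∀ y, star (kx y) = kx y := fun y => (IsSelfAdjoint.of_nonneg (hkxpos y)).star_eq
  have hXnn : 0 ≤ φ (star m * m) := hφ _ (star_mul_self_nonneg m)
  have htpos : ∀ y : Rn n, 0 < q y * c⁻¹ := fun y => mul_pos (hqpos y) (inv_pos.mpr hc)
  -- the symmetrized integrand
  have hs1 : Integrable (fun y : Rn n => star m * (kx y * u y)) := hku.const_mul _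
  have hs2 : Integrable (fun y : Rn n => star (kx y * u y) * m) :=
    (S6.integrable_star' hku).mul_const _
  have hsrw : (fun y : Rn n => star m * kx y * u y + star (u y) * kx y * m)
      = fun y : Rn n => star m * (kx y * u y) + star (kx y * u y) * m := by
    funext y
    rw [mul_assoc, star_mul, hkself, mul_assoc]
  have hs_int : Integrable (fun y : Rn n => star m * kx y * u y + star (u y) * kx y * m) := by
    rw [hsrw]; exact hs1.add hs2
  have hIs : ∫ y : Rn n, (star m * kx y * u y + star (u y) * kx y * m)
      = star m * m + star m * m := by
    rw [hsrw, integral_add hs1 hs2, S6.int_const_mul hku,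
      S6.int_mul_const (S6.integrable_star' hku), S6.integral_star' hku, ← hm]
  have h2X : ∫ y : Rn n, φ (star m * kx y * u y + star (u y) * kx y * m) = 2 * φ (star m * m) := by
    rw [φ.integral_comp_comm hs_int, hIs, map_add]; ring
  -- pointwise cross-term bound
  have hsle : ∀ y : Rn n, φ (star m * kx y * u y + star (u y) * kx y * m)
      ≤ (q y * c⁻¹) * φ (star m * kx y * m) + (q y * c⁻¹)⁻¹ * φ (star (u y) * kx y * u y) := by
    intro y
    have hcb := S6.cross_bound (kx y) m (u y) (hkxpos y) (htpos y)
    have h3 := hφm _ _ hcb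
    simp only [map_add, _root_.map_smul, smul_eq_mul] at h3
    rw [map_add]
    exact h3
  -- the first (conjugated) term
  have hB1rw : (fun y : Rn n => q y • (star m * kx y * m))
      = fun y : Rn n => star m * (q y • kx y) * m := by
    funext y; rw [mul_smul_comm, smul_mul_assoc]
  have hB1int : Integrable (fun y : Rn n => q y • (star m * kx y * m)) := by
    rw [hB1rw]; exact (hint1.1.const_mul (star m)).mul_const m
  have hB1val : ∫ y : Rn n, q y • (star m * kx y * m)
      = star m * (∫ y : Rn n, q y • kx y) * m := by
    rw [hB1rw, S6.int_mul_const (hint1.1.const_mul (star m)) m, S6.int_const_mul hint1.1]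
  have hconjle : star m * (∫ y : Rn n, q y • kx y) * m ≤ c • (star m * m) := by
    calc star m * (∫ y : Rn n, q y • kx y) * m ≤ star m * (c • (1:A)) * m :=
          star_left_conjugate_le_conjugate hint1.2 m
      _ = c • (star m * m) := by rw [mul_smul_comm, mul_one, smul_mul_assoc]
  have hT1 : ∫⁻ y : Rn n, ENNReal.ofReal ((q y * c⁻¹) * φ (star m * kx y * m))
      ≤ ENNReal.ofReal (φ (star m * m)) := by
    have hCrw1 : (fun y : Rn n => (q y * c⁻¹) * φ (star m * kx y * m))
        = fun y : Rn n => c⁻¹ * φ (q y • (star m * kx y * m)) := by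
      funext y; rw [φ.map_smul, smul_eq_mul]; ring
    have hint' : Integrable (fun y : Rn n => (q y * c⁻¹) * φ (star m * kx y * m)) := by
      rw [hCrw1]; exact (φ.integrable_comp hB1int).const_mul _
    have hnn : 0 ≤ᵐ[volume] fun y : Rn n => (q y * c⁻¹) * φ (star m * kx y * m) :=
      ae_of_all _ fun y => mul_nonneg (htpos y).le (hφ _ (star_left_conjugate_nonneg (hkxpos y) m))
    rw [← MeasureTheory.ofReal_integral_eq_lintegral_ofReal hint' hnn]
    apply ENNReal.ofReal_le_ofReal
    rw [hCrw1, integral_const_mul, φ.integral_comp_comm hB1int, hB1val]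
    have h5 := hφm _ _ hconjle
    rw [φ.map_smul, smul_eq_mul] at h5
    calc c⁻¹ * φ (star m * (∫ y : Rn n, q y • kx y) * m) ≤ c⁻¹ * (c * φ (star m * m)) :=
          mul_le_mul_of_nonneg_left h5 (inv_nonneg.mpr hc.le)
      _ = φ (star m * m) := by field_simp
  -- the second term
  have hmeas2 : Measurable fun y : Rn n =>
      ENNReal.ofReal ((q y)⁻¹ * φ (star (u y) * kx y * u y)) := by
    apply Measurable.ennreal_ofReal
    exact hq.inv.mul (φ.continuous.comp
      (((continuous_star.comp hcontu).mul hkxc).mul hcontu)).measurable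
  have hT2 : ∫⁻ y : Rn n, ENNReal.ofReal ((q y * c⁻¹)⁻¹ * φ (star (u y) * kx y * u y))
      = ENNReal.ofReal c * ∫⁻ y : Rn n, ENNReal.ofReal ((q y)⁻¹ * φ (star (u y) * kx y * u y)) := by
    rw [← lintegral_const_mul _ hmeas2]
    refine lintegral_congr fun y => ?_
    rw [← ENNReal.ofReal_mul hc.le]
    congr 1
    rw [mul_inv, inv_inv]
    ring
  have hmeas1 : Measurable fun y : Rn n =>
      ENNReal.ofReal ((q y * c⁻¹) * φ (star m * kx y * m)) := by
    apply Measurable.ennreal_ofReal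
    exact (hq.mul measurable_const).mul (φ.continuous.comp
      ((continuous_const.mul hkxc).mul continuous_const)).measurable
  have hchain : ENNReal.ofReal (2 * φ (star m * m)) ≤ ENNReal.ofReal (φ (star m * m)) +
      ENNReal.ofReal c * ∫⁻ y : Rn n, ENNReal.ofReal ((q y)⁻¹ * φ (star (u y) * kx y * u y)) := by
    calc ENNReal.ofReal (2 * φ (star m * m))
        = ENNReal.ofReal (∫ y : Rn n, φ (star m * kx y * u y + star (u y) * kx y * m)) := by
          rw [h2X]
      _ ≤ ∫⁻ y : Rn n, ENNReal.ofReal (φ (star m * kx y * u y + star (u y) * kx y * m)) :=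
          S6.ofReal_integral_le (φ.integrable_comp hs_int)
      _ ≤ ∫⁻ y : Rn n, (ENNReal.ofReal ((q y * c⁻¹) * φ (star m * kx y * m))
            + ENNReal.ofReal ((q y * c⁻¹)⁻¹ * φ (star (u y) * kx y * u y))) := by
          refine lintegral_mono fun y => ?_
          exact le_trans (ENNReal.ofReal_le_ofReal (hsle y)) ENNReal.ofReal_add_le
      _ = (∫⁻ y : Rn n, ENNReal.ofReal ((q y * c⁻¹) * φ (star m * kx y * m)))
            + ∫⁻ y : Rn n, ENNReal.ofReal ((q y * c⁻¹)⁻¹ * φ (star (u y) * kx y * u y)) :=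
          lintegral_add_left hmeas1 _
      _ ≤ ENNReal.ofReal (φ (star m * m)) + ENNReal.ofReal c *
            ∫⁻ y : Rn n, ENNReal.ofReal ((q y)⁻¹ * φ (star (u y) * kx y * u y)) := by
          rw [hT2]
          exact add_le_add hT1 le_rfl
  rw [two_mul, ENNReal.ofReal_add hXnn hXnn] at hchain
  exact (ENNReal.add_le_add_iff_left ENNReal.ofReal_ne_top).mp hchain

lemma main_ineq {n : ℕ} (k : Rn n → Rn n → A)
    (hk : Continuous fun pr : Rn n × Rn n => k pr.1 pr.2)
    (hkpos : ∀ x y : Rn n, 0 ≤ k x y)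
    (p q : Rn n → ℝ) (hp : Measurable p) (hq : Measurable q)
    (hppos : ∀ x, 0 < p x) (hqpos : ∀ y, 0 < q y)
    (a b : ℝ) (ha : 0 < a) (hb : 0 < b)
    (hint1 : ∀ x : Rn n, Integrable (fun y => q y • k x y) ∧
      (∫ y : Rn n, q y • k x y) ≤ (a * p x) • (1:A))
    (hint2 : ∀ y : Rn n, Integrable (fun x => p x • k x y) ∧
      (∫ x : Rn n, p x • k x y) ≤ (b * q y) • (1:A))
    (u : Rn n → A) (hcontu : Continuous u)
    (hGint : Integrable (fun x : Rn n => star (u x) * u x))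
    (hku : ∀ x : Rn n, Integrable fun y => k x y * u y)
    (K : Rn n → A) (hKx : ∀ x, K x = ∫ y : Rn n, k x y * u y)
    (hF : Integrable (fun x : Rn n => star (K x) * K x))
    (φ : A →L[ℝ] ℝ) (hφ : ∀ d : A, 0 ≤ d → 0 ≤ φ d) :
    φ (∫ x : Rn n, star (K x) * K x) ≤ φ ((a * b) • ∫ x : Rn n, star (u x) * u x) := by
  have hφm : ∀ c₁ d₁ : A, c₁ ≤ d₁ → φ c₁ ≤ φ d₁ := fun c₁ d₁ h => by
    have h2 := hφ _ (sub_nonneg.mpr h); rw [map_sub] at h2; linarith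
  have hφFint : Integrable (fun x : Rn n => φ (star (K x) * K x)) := φ.integrable_comp hF
  have hFnn : ∀ x : Rn n, 0 ≤ φ (star (K x) * K x) := fun x => hφ _ (star_mul_self_nonneg _)
  have hGnn : ∀ x : Rn n, 0 ≤ φ (star (u x) * u x) := fun x => hφ _ (star_mul_self_nonneg _)
  have hinmeas : ∀ x : Rn n, Measurable fun y : Rn n =>
      ENNReal.ofReal ((q y)⁻¹ * φ (star (u y) * k x y * u y)) := by
    intro x
    apply Measurable.ennreal_ofReal
    exact hq.inv.mul (φ.continuous.comp (((continuous_star.comp hcontu).mul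
      (hk.comp (Continuous.prodMk_right x))).mul hcontu)).measurable
  have pointwise : ∀ x : Rn n, ENNReal.ofReal (φ (star (K x) * K x)) ≤
      ENNReal.ofReal (a * p x) *
        ∫⁻ y : Rn n, ENNReal.ofReal ((q y)⁻¹ * φ (star (u y) * k x y * u y)) := by
    intro x
    exact S6.pointwise_bound (fun y => k x y) (hk.comp (Continuous.prodMk_right x)) (hkpos x)
      q hq hqpos (a * p x) (mul_pos ha (hppos x)) (hint1 x) u hcontu (hku x) (K x) (hKx x) φ hφ
  have hstep1 : ENNReal.ofReal (φ (∫ x : Rn n, star (K x) * K x)) ≤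
      ∫⁻ x : Rn n, ENNReal.ofReal (a * p x) *
        ∫⁻ y : Rn n, ENNReal.ofReal ((q y)⁻¹ * φ (star (u y) * k x y * u y)) := by
    rw [← φ.integral_comp_comm hF,
      MeasureTheory.ofReal_integral_eq_lintegral_ofReal hφFint (ae_of_all _ hFnn)]
    exact lintegral_mono pointwise
  have hjoint : ∀ x : Rn n, ENNReal.ofReal (a * p x) *
      (∫⁻ y : Rn n, ENNReal.ofReal ((q y)⁻¹ * φ (star (u y) * k x y * u y)))
      = ∫⁻ y : Rn n, ENNReal.ofReal ((a * p x) * ((q y)⁻¹ * φ (star (u y) * k x y * u y))) := by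
    intro x
    rw [← lintegral_const_mul _ (hinmeas x)]
    refine lintegral_congr fun y => ?_
    rw [ENNReal.ofReal_mul (mul_nonneg ha.le (hppos x).le)]
  have hswap : (∫⁻ x : Rn n, ∫⁻ y : Rn n,
        ENNReal.ofReal ((a * p x) * ((q y)⁻¹ * φ (star (u y) * k x y * u y))))
      = ∫⁻ y : Rn n, ∫⁻ x : Rn n,
        ENNReal.ofReal ((a * p x) * ((q y)⁻¹ * φ (star (u y) * k x y * u y))) := by
    apply lintegral_lintegral_swap
    apply Measurable.aemeasurable
    apply Measurable.ennreal_ofReal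
    have h1 : Measurable fun pr : Rn n × Rn n => a * p pr.1 :=
      (hp.comp measurable_fst).const_mul a
    have h2 : Measurable fun pr : Rn n × Rn n => (q pr.2)⁻¹ := (hq.comp measurable_snd).inv
    have h3 : Continuous fun pr : Rn n × Rn n => star (u pr.2) * k pr.1 pr.2 * u pr.2 :=
      ((continuous_star.comp (hcontu.comp continuous_snd)).mul hk).mul
        (hcontu.comp continuous_snd)
    exact h1.mul (h2.mul (φ.continuous.comp h3).measurable)
  have hinner : ∀ y : Rn n, (∫⁻ x : Rn n,
      ENNReal.ofReal ((a * p x) * ((q y)⁻¹ * φ (star (u y) * k x y * u y))))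
      ≤ ENNReal.ofReal (a * b * φ (star (u y) * u y)) := by
    intro y
    have hqy := hqpos y
    have hCrw : (fun x : Rn n => (a * p x) * ((q y)⁻¹ * φ (star (u y) * k x y * u y)))
        = fun x : Rn n => (a * (q y)⁻¹) * φ (star (u y) * (p x • k x y) * u y) := by
      funext x
      rw [mul_smul_comm, smul_mul_assoc, φ.map_smul, smul_eq_mul]
      ring
    have hconjint : Integrable (fun x : Rn n => star (u y) * (p x • k x y) * u y) :=
      ((hint2 y).1.const_mul (star (u y))).mul_const (u y)
    have hint' : Integrable
        (fun x : Rn n => (a * p x) * ((q y)⁻¹ * φ (star (u y) * k x y * u y))) := by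
      rw [hCrw]; exact (φ.integrable_comp hconjint).const_mul _
    have hnn : 0 ≤ᵐ[volume] fun x : Rn n =>
        (a * p x) * ((q y)⁻¹ * φ (star (u y) * k x y * u y)) :=
      ae_of_all _ fun x => mul_nonneg (mul_nonneg ha.le (hppos x).le)
        (mul_nonneg (inv_nonneg.mpr hqy.le) (hφ _ (star_left_conjugate_nonneg (hkpos x y) (u y))))
    rw [← MeasureTheory.ofReal_integral_eq_lintegral_ofReal hint' hnn]
    apply ENNReal.ofReal_le_ofReal
    have hval : ∫ x : Rn n, (a * p x) * ((q y)⁻¹ * φ (star (u y) * k x y * u y))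
        = (a * (q y)⁻¹) * φ (star (u y) * (∫ x : Rn n, p x • k x y) * u y) := by
      rw [hCrw, integral_const_mul, φ.integral_comp_comm hconjint,
        S6.int_mul_const ((hint2 y).1.const_mul (star (u y))) (u y),
        S6.int_const_mul (hint2 y).1]
    rw [hval]
    have hle2 : star (u y) * (∫ x : Rn n, p x • k x y) * u y
        ≤ (b * q y) • (star (u y) * u y) := by
      calc star (u y) * (∫ x : Rn n, p x • k x y) * u y
          ≤ star (u y) * ((b * q y) • (1:A)) * u y := star_left_conjugate_le_conjugate (hint2 y).2 (u y)
        _ = (b * q y) • (star (u y) * u y) := by rw [mul_smul_comm, mul_one, smul_mul_assoc]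
    have h6 := hφm _ _ hle2
    rw [φ.map_smul, smul_eq_mul] at h6
    calc (a * (q y)⁻¹) * φ (star (u y) * (∫ x : Rn n, p x • k x y) * u y)
        ≤ (a * (q y)⁻¹) * ((b * q y) * φ (star (u y) * u y)) :=
          mul_le_mul_of_nonneg_left h6 (mul_nonneg ha.le (inv_nonneg.mpr hqy.le))
      _ = a * b * φ (star (u y) * u y) := by field_simp
  have hfinal : (∫⁻ y : Rn n, ENNReal.ofReal (a * b * φ (star (u y) * u y)))
      = ENNReal.ofReal (φ ((a * b) • ∫ x : Rn n, star (u x) * u x)) := by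
    have hginta : Integrable (fun y : Rn n => a * b * φ (star (u y) * u y)) :=
      (φ.integrable_comp hGint).const_mul _
    rw [← MeasureTheory.ofReal_integral_eq_lintegral_ofReal hginta
      (ae_of_all _ fun y => mul_nonneg (mul_nonneg ha.le hb.le) (hGnn y))]
    congr 1
    rw [integral_const_mul, φ.integral_comp_comm hGint, φ.map_smul, smul_eq_mul]
  have hrhsnn : 0 ≤ φ ((a * b) • ∫ x : Rn n, star (u x) * u x) := by
    rw [φ.map_smul, smul_eq_mul, ← φ.integral_comp_comm hGint]
    exact mul_nonneg (mul_nonneg ha.le hb.le) (integral_nonneg hGnn)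
  have hcomb : ENNReal.ofReal (φ (∫ x : Rn n, star (K x) * K x)) ≤
      ENNReal.ofReal (φ ((a * b) • ∫ x : Rn n, star (u x) * u x)) := by
    calc ENNReal.ofReal (φ (∫ x : Rn n, star (K x) * K x)) ≤ _ := hstep1
      _ = ∫⁻ x : Rn n, ∫⁻ y : Rn n,
            ENNReal.ofReal ((a * p x) * ((q y)⁻¹ * φ (star (u y) * k x y * u y))) :=
          lintegral_congr hjoint
      _ = _ := hswap
      _ ≤ ∫⁻ y : Rn n, ENNReal.ofReal (a * b * φ (star (u y) * u y)) := lintegral_mono hinner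
      _ = _ := hfinal
  exact (ENNReal.ofReal_le_ofReal_iff hrhsnn).mp hcomb

end S6

end Statement6Main

/-- Schur's test for positive `A`-valued kernels. -/
theorem statement6 {n : ℕ} {A : Type*} [NormedRing A] [StarRing A] [CStarRing A]
    [NormedAlgebra ℂ A] [CompleteSpace A] [StarModule ℂ A]
    [PartialOrder A] [StarOrderedRing A]
    (k : Rn n → Rn n → A) (hk : Continuous fun p : Rn n × Rn n => k p.1 p.2)
    (hkpos : ∀ x y : Rn n, 0 ≤ k x y)
    (p q : Rn n → ℝ) (hp : Measurable p) (hq : Measurable q)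
    (hppos : ∀ x, 0 < p x) (hqpos : ∀ y, 0 < q y)
    (a b : ℝ) (ha : 0 < a) (hb : 0 < b)
    (hint1 : ∀ x : Rn n, MeasureTheory.Integrable (fun y => q y • k x y) ∧
      (∫ y : Rn n, q y • k x y) ≤ (a * p x) • (1 : A))
    (hint2 : ∀ y : Rn n, MeasureTheory.Integrable (fun x => p x • k x y) ∧
      (∫ x : Rn n, p x • k x y) ≤ (b * q y) • (1 : A))
    (u : Rn n → A) (hu : IsSchwartzMap u)
    (hku : ∀ x : Rn n, MeasureTheory.Integrable fun y => k x y * u y) :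
    (∫ x : Rn n, star (∫ y : Rn n, k x y * u y) * (∫ y : Rn n, k x y * u y)) ≤
      (a * b) • ∫ x : Rn n, star (u x) * u x ∧
    Hnorm (fun x => ∫ y : Rn n, k x y * u y) ≤ Real.sqrt (a * b) * Hnorm u := by
  have hcontu : Continuous u := hu.1.continuous
  have hGint : MeasureTheory.Integrable (fun x : Rn n => star (u x) * u x) :=
    S6.schwartz_sq_integrable hu
  have hG0 : ∀ x : Rn n, 0 ≤ star (u x) * u x := fun x => star_mul_self_nonneg _
  have main : (∫ x : Rn n, star (∫ y : Rn n, k x y * u y) * (∫ y : Rn n, k x y * u y))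
      ≤ (a * b) • ∫ x : Rn n, star (u x) * u x := by
    by_cases hF : MeasureTheory.Integrable
      (fun x : Rn n => star (∫ y : Rn n, k x y * u y) * (∫ y : Rn n, k x y * u y)) volume
    · have key := fun (φ : A →L[ℝ] ℝ) (hφ : ∀ d : A, 0 ≤ d → 0 ≤ φ d) =>
        S6.main_ineq k hk hkpos p q hp hq hppos hqpos a b ha hb hint1 hint2
          u hcontu hGint hku (fun x => ∫ y : Rn n, k x y * u y) (fun _ => rfl) hF φ hφ
      have h7 := S6.nonneg_of_dual
        ((a * b) • (∫ x : Rn n, star (u x) * u x)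
          - ∫ x : Rn n, star (∫ y : Rn n, k x y * u y) * (∫ y : Rn n, k x y * u y))
        (fun φ hφ => by
          rw [map_sub]
          have hk2 := key φ hφ
          linarith)
      exact sub_nonneg.mp h7
    · rw [MeasureTheory.integral_undef hF]
      exact smul_nonneg (mul_nonneg ha.le hb.le) (S6.integral_nonneg_A hG0)
  refine ⟨main, ?_⟩
  letI : CStarAlgebra A := ⟨⟩
  have hF0 : 0 ≤ ∫ x : Rn n, star (∫ y : Rn n, k x y * u y) * (∫ y : Rn n, k x y * u y) :=
    S6.integral_nonneg_A fun x => star_mul_self_nonneg _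
  have hnorm : ‖∫ x : Rn n, star (∫ y : Rn n, k x y * u y) * (∫ y : Rn n, k x y * u y)‖
      ≤ (a * b) * ‖∫ x : Rn n, star (u x) * u x‖ := by
    calc ‖∫ x : Rn n, star (∫ y : Rn n, k x y * u y) * (∫ y : Rn n, k x y * u y)‖
        ≤ ‖(a * b) • ∫ x : Rn n, star (u x) * u x‖ :=
          CStarAlgebra.norm_le_norm_of_nonneg_of_le hF0 main
      _ = (a * b) * ‖∫ x : Rn n, star (u x) * u x‖ := by
          rw [norm_smul, Real.norm_eq_abs, abs_of_pos (mul_pos ha hb)]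
  show Real.sqrt ‖∫ x : Rn n, star (∫ y : Rn n, k x y * u y) * (∫ y : Rn n, k x y * u y)‖
      ≤ Real.sqrt (a * b) * Real.sqrt ‖∫ x : Rn n, star (u x) * u x‖
  calc Real.sqrt ‖∫ x : Rn n, star (∫ y : Rn n, k x y * u y) * (∫ y : Rn n, k x y * u y)‖
      ≤ Real.sqrt ((a * b) * ‖∫ x : Rn n, star (u x) * u x‖) := Real.sqrt_le_sqrt hnorm
    _ = Real.sqrt (a * b) * Real.sqrt ‖∫ x : Rn n, star (u x) * u x‖ :=
        Real.sqrt_mul (mul_nonneg ha.le hb.le) _
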